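/- Let $\mu$ be a Borel probability measure on $[0,1]^d$, let $\mathtt a = \frac{1}{2}\cdot 15^{-d}|B(0;1)|$ where $|B(0;1)|$ is the Lebesgue measure of the unit ball in $\mathbb{R}^d$, and define $\mathcal{G} = \{x \in \operatorname{supp}\mu : \mu(B(x;r)) \geq \mathtt a r^d \text{ for all } r \in (0,1]\}$. Then $\mu(\mathcal{G}) \geq 1/2$. -/

import Mathlib

open MeasureTheory
open scoped ENNReal

noncomputable section

/-- The (topological) support of a Borel measure: points all of whose
neighbourhoods have positive measure. -/
def msupport {X : Type*} [TopologicalSpace X] [MeasurableSpace X] (μ : Measure X) : Set X :=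
  {x | ∀ U ∈ nhds x, 0 < μ U}

/-- The constant `𝚊 = (1/2)·15^{-d}·|B(0;1)|`. -/
def ballConst (d : ℕ) : ℝ :=
  (1 / 2) * (15 : ℝ) ^ (-(d : ℤ)) *
    (volume (Metric.ball (0 : EuclideanSpace ℝ (Fin d)) 1)).toReal

theorem stmt13 (d : ℕ) (μ : Measure (EuclideanSpace ℝ (Fin d))) [IsProbabilityMeasure μ]
    (hsupp : μ {x : EuclideanSpace ℝ (Fin d) | ∀ i, x i ∈ Set.Icc (0 : ℝ) 1}ᶜ = 0) :
    (2 : ℝ≥0∞)⁻¹ ≤ μ {x | x ∈ msupport μ ∧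
      ∀ r ∈ Set.Ioc (0 : ℝ) 1,
        ENNReal.ofReal (ballConst d * r ^ d) ≤ μ (Metric.ball x r)} := by
  classical
  set α := EuclideanSpace ℝ (Fin d) with hαdef
  set G : Set α := {x | x ∈ msupport μ ∧ ∀ r ∈ Set.Ioc (0 : ℝ) 1,
      ENNReal.ofReal (ballConst d * r ^ d) ≤ μ (Metric.ball x r)} with hGdef
  set Q : Set α := {x | ∀ i, x i ∈ Set.Icc (0 : ℝ) 1} with hQdef
  -- case d = 0
  rcases Nat.eq_zero_or_pos d with hd | hd
  · subst hd
    have hsub : Subsingleton α := by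
      constructor; intro a b; ext i; exact absurd i.2 (by simp)
    have hG : G = Set.univ := by
      ext x
      simp only [hGdef, Set.mem_setOf_eq, Set.mem_univ, iff_true]
      constructor
      · intro U hU
        have hxU : x ∈ U := mem_of_mem_nhds hU
        have hU2 : U = Set.univ := by
          ext y; simp only [Set.mem_univ, iff_true]
          rwa [Subsingleton.elim y x]
        rw [hU2, measure_univ]; norm_num
      · intro r hr
        have hball : Metric.ball x r = Set.univ := by
          ext y; simp only [Metric.mem_ball, Set.mem_univ, iff_true]
          rw [Subsingleton.elim y x]; simpa using hr.1
        have hvol1 : (volume : Measure α) Set.univ = 1 := by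
          have h := (EuclideanSpace.volume_preserving_symm_measurableEquiv_toLp (Fin 0)).symm
          rw [← h.measure_preimage MeasurableSet.univ.nullMeasurableSet]
          rw [Set.preimage_univ, MeasureTheory.volume_pi, Measure.pi_univ]; simp
        have hBC : ballConst 0 = 1 / 2 := by
          have : Metric.ball (0 : α) 1 = Set.univ := by
            ext y; simp only [Metric.mem_ball, Set.mem_univ, iff_true]
            rw [Subsingleton.elim y (0 : α)]; simp
          rw [ballConst]
          rw [show (Metric.ball (0 : EuclideanSpace ℝ (Fin 0)) 1) = Set.univ from this, hvol1]
          norm_num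
        rw [hball, measure_univ, hBC]
        calc ENNReal.ofReal (1 / 2 * r ^ 0) = ENNReal.ofReal (1 / 2) := by norm_num
          _ ≤ 1 := by rw [show (1 : ℝ≥0∞) = ENNReal.ofReal 1 by simp]
                      exact ENNReal.ofReal_le_ofReal (by norm_num)
    rw [hG, measure_univ]
    exact le_trans (by norm_num) le_rfl
  -- main case d ≥ 1
  have hnt : Nontrivial α :=
    Module.nontrivial_of_finrank_pos (R := ℝ)
      (by rw [finrank_euclideanSpace_fin]; exact hd)
  set vB : ℝ≥0∞ := volume (Metric.ball (0 : α) 1) with hvBdef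
  have hvB0 : vB ≠ 0 := (Metric.measure_ball_pos _ _ one_pos).ne'
  have hvBt : vB ≠ ⊤ := measure_ball_lt_top.ne
  have haK : 0 < ballConst d := by
    rw [ballConst]
    have h1 : 0 < (volume (Metric.ball (0 : EuclideanSpace ℝ (Fin d)) 1)).toReal :=
      ENNReal.toReal_pos hvB0 hvBt
    positivity
  -- the "bad" set
  set S : Set α := {x | x ∈ Q ∧ ∃ r, r ∈ Set.Ioc (0 : ℝ) 1 ∧
      μ (Metric.ball x r) < ENNReal.ofReal (ballConst d * r ^ d)} with hSdef
  -- complement of G is contained in Qᶜ ∪ S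
  have hGc : Gᶜ ⊆ Qᶜ ∪ S := by
    intro x hx
    by_cases hxQ : x ∈ Q
    · right
      refine ⟨hxQ, ?_⟩
      by_cases hB : ∀ r ∈ Set.Ioc (0 : ℝ) 1,
          ENNReal.ofReal (ballConst d * r ^ d) ≤ μ (Metric.ball x r)
      · -- then x ∉ msupport μ
        have hns : x ∉ msupport μ := fun hs => hx ⟨hs, hB⟩
        change ¬ ∀ U ∈ nhds x, 0 < μ U at hns; simp only [not_forall] at hns
        obtain ⟨U, hU, hU0⟩ := hns
        have hU0' : μ U = 0 := by simpa using hU0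
        obtain ⟨ε, hε, hballU⟩ := Metric.mem_nhds_iff.mp hU
        refine ⟨min ε 1, ⟨lt_min hε one_pos, min_le_right _ _⟩, ?_⟩
        have hμ0 : μ (Metric.ball x (min ε 1)) = 0 :=
          measure_mono_null (le_trans (Metric.ball_subset_ball (min_le_left _ _)) hballU) hU0'
        rw [hμ0]
        have : 0 < ballConst d * (min ε 1) ^ d := by
          have : 0 < min ε 1 := lt_min hε one_pos
          positivity
        exact ENNReal.ofReal_pos.mpr this
      · push_neg at hB
        obtain ⟨r, hr, hlt⟩ := hB
        exact ⟨r, hr, hlt⟩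
    · left; exact hxQ
  -- main estimate : μ S ≤ 1/2
  have hS : μ S ≤ 2⁻¹ := by
    have hch : ∀ x ∈ S, ∃ r, r ∈ Set.Ioc (0 : ℝ) 1 ∧
        μ (Metric.ball x r) < ENNReal.ofReal (ballConst d * r ^ d) := fun x hx => hx.2
    choose! ρ h1 h2 using hch
    obtain ⟨u, huS, hdisj, hcov⟩ := Vitali.exists_disjoint_subfamily_covering_enlargement
      (fun x : α => Metric.ball x (ρ x / 5)) S ρ 2 one_lt_two
      (fun x hx => (h1 x hx).1.le) 1 (fun x hx => (h1 x hx).2)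
      (fun x hx => Metric.nonempty_ball.2 (by have := (h1 x hx).1; linarith))
    -- covering of S by enlarged balls
    have hScov : S ⊆ ⋃ b ∈ u, Metric.ball b (ρ b) := by
      intro a ha
      obtain ⟨b, hbu, ⟨y, hy⟩, hab⟩ := hcov a ha
      have h0b := (h1 b (huS hbu)).1
      have h0a := (h1 a ha).1
      simp only [Set.mem_iUnion]
      refine ⟨b, hbu, ?_⟩
      have d1 : dist y a < ρ a / 5 := Metric.mem_ball.mp hy.1
      have d2 : dist y b < ρ b / 5 := Metric.mem_ball.mp hy.2
      have := dist_triangle a y b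
      rw [Metric.mem_ball]
      rw [dist_comm] at d1
      linarith
    -- countability of u
    have hpd : Pairwise (Function.onFun Disjoint fun b : u => Metric.ball (b : α) (ρ b / 5)) :=
      fun b c hbc => hdisj b.2 c.2 (fun h => hbc (Subtype.ext h))
    have hcnt : u.Countable := by
      have hcm := Measure.countable_meas_pos_of_disjoint_iUnion
        (μ := (volume : Measure α)) (fun _ => measurableSet_ball) hpd
      have huniv : {b : u | 0 < volume (Metric.ball (b : α) (ρ (b : α) / 5))} = Set.univ := by
        ext b
        simp only [Set.mem_setOf_eq, Set.mem_univ, iff_true]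
        have h0b := (h1 b (huS b.2)).1
        exact Metric.measure_ball_pos _ _ (by linarith)
      rw [huniv] at hcm
      exact Set.countable_coe_iff.mp (Set.countable_univ_iff.mp hcm)
    -- ball volume formula
    have hball : ∀ (b : α) {r : ℝ}, 0 ≤ r →
        volume (Metric.ball b r) = ENNReal.ofReal (r ^ d) * vB := by
      intro b r hr
      rw [Measure.addHaar_ball volume b hr, finrank_euclideanSpace_fin]
    set c : ℝ≥0∞ := ENNReal.ofReal ((1 / 2) * ((3 : ℝ) ^ d)⁻¹) with hcdef
    -- pointwise identity
    have hc : ∀ b ∈ u, ENNReal.ofReal (ballConst d * ρ b ^ d)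
        = c * volume (Metric.ball b (ρ b / 5)) := by
      intro b hb
      have h0b := (h1 b (huS hb)).1
      rw [hball b (by positivity), ← ENNReal.ofReal_toReal hvBt, hcdef,
        ← ENNReal.ofReal_mul (by positivity), ← ENNReal.ofReal_mul (by positivity)]
      congr 1
      have h15 : (15 : ℝ) ^ (-(d : ℤ)) = ((15 : ℝ) ^ d)⁻¹ := by
        rw [zpow_neg, zpow_natCast]
      have h15' : (15 : ℝ) ^ d = 3 ^ d * 5 ^ d := by rw [← mul_pow]; norm_num
      rw [ballConst, h15, h15', div_pow]
      have h3 : (3 : ℝ) ^ d ≠ 0 := by positivity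
      have h5 : (5 : ℝ) ^ d ≠ 0 := by positivity
      field_simp
      ring
    -- cube of side 3
    set K : Set α := {x | ∀ i, x i ∈ Set.Icc (-1 : ℝ) 2} with hKdef
    have hKvol : volume K = ENNReal.ofReal 3 ^ d := by
      have hm : MeasurableSet K := by
        have h1 : K = ⋂ i, (fun x : α => x i) ⁻¹' Set.Icc (-1 : ℝ) 2 := by
          ext x; simp [hKdef]
        rw [h1]
        exact MeasurableSet.iInter fun i => (EuclideanSpace.proj i : α →L[ℝ] ℝ).continuous.measurable measurableSet_Icc
      have h := (EuclideanSpace.volume_preserving_symm_measurableEquiv_toLp (Fin d)).symm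
      rw [← h.measure_preimage hm.nullMeasurableSet]
      have h2 : (MeasurableEquiv.toLp 2 (Fin d → ℝ)).symm.symm ⁻¹' K
          = Set.univ.pi fun _ : Fin d => Set.Icc (-1 : ℝ) 2 := by
        ext x
        simp only [hKdef, Set.mem_preimage, Set.mem_setOf_eq, Set.mem_pi, Set.mem_univ,
          forall_true_left, MeasurableEquiv.symm_symm]
        rfl
      rw [h2, volume_pi_pi]
      simp [Real.volume_Icc]
      norm_num
    -- small balls are in K
    have hKsub : (⋃ b ∈ u, Metric.ball b (ρ b / 5)) ⊆ K := by
      intro y hy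
      simp only [Set.mem_iUnion] at hy
      obtain ⟨b, hbu, hyb⟩ := hy
      have hbS := huS hbu
      have h0b := (h1 b hbS).1
      have h1b := (h1 b hbS).2
      intro i
      have hbQ : b i ∈ Set.Icc (0 : ℝ) 1 := hbS.1 i
      have hcoord : dist (y i) (b i) ≤ dist y b := by
        rw [EuclideanSpace.dist_eq]
        refine le_trans ?_ (Real.sqrt_le_sqrt (Finset.single_le_sum
          (f := fun j => dist (y j) (b j) ^ 2) (fun j _ => sq_nonneg _) (Finset.mem_univ i)))
        rw [Real.sqrt_sq dist_nonneg]
      have hd5 : dist y b < ρ b / 5 := Metric.mem_ball.mp hyb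
      have habs : |y i - b i| ≤ dist y b := by rwa [← Real.dist_eq]
      obtain ⟨hb0, hb1⟩ := hbQ
      have h1' := abs_le.mp habs
      constructor <;> [nlinarith [h1'.1]; nlinarith [h1'.2]]
    -- chain of inequalities
    calc μ S ≤ μ (⋃ b ∈ u, Metric.ball b (ρ b)) := measure_mono hScov
      _ ≤ ∑' b : u, μ (Metric.ball (b : α) (ρ (b : α))) := measure_biUnion_le μ hcnt _
      _ ≤ ∑' b : u, ENNReal.ofReal (ballConst d * ρ (b : α) ^ d) :=
          ENNReal.tsum_le_tsum fun b => (h2 b (huS b.2)).le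
      _ = ∑' b : u, c * volume (Metric.ball (b : α) (ρ (b : α) / 5)) :=
          tsum_congr fun b => hc b b.2
      _ = c * volume (⋃ b ∈ u, Metric.ball b (ρ b / 5)) := by
          rw [measure_biUnion hcnt hdisj (fun b _ => measurableSet_ball), ENNReal.tsum_mul_left]
      _ ≤ c * volume K := mul_le_mul_right (measure_mono hKsub) c
      _ = 2⁻¹ := by
          rw [hKvol, hcdef, ← ENNReal.ofReal_pow (by norm_num),
            ← ENNReal.ofReal_mul (by positivity)]
          have h3 : (3 : ℝ) ^ d ≠ 0 := by positivity
          have : (1 / 2 : ℝ) * ((3 : ℝ) ^ d)⁻¹ * 3 ^ d = 1 / 2 := by field_simp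
          rw [this]
          rw [show (1 / 2 : ℝ) = (2 : ℝ)⁻¹ by norm_num,
            ENNReal.ofReal_inv_of_pos two_pos]
          norm_num
  -- conclusion
  have h1u : (1 : ℝ≥0∞) ≤ μ G + 2⁻¹ := by
    calc (1 : ℝ≥0∞) = μ Set.univ := measure_univ.symm
      _ = μ (G ∪ Gᶜ) := by rw [Set.union_compl_self]
      _ ≤ μ G + μ Gᶜ := measure_union_le _ _
      _ ≤ μ G + (μ Qᶜ + μ S) :=
          add_le_add_right (le_trans (measure_mono hGc) (measure_union_le _ _)) _
      _ = μ G + μ S := by rw [hsupp]; simp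
      _ ≤ μ G + 2⁻¹ := add_le_add_right hS _
  have hhalf : (1 : ℝ≥0∞) - 2⁻¹ = 2⁻¹ := by
    rw [← ENNReal.inv_two_add_inv_two, ENNReal.add_sub_cancel_right (by simp)]
  calc (2 : ℝ≥0∞)⁻¹ = 1 - 2⁻¹ := hhalf.symm
    _ ≤ μ G := tsub_le_iff_right.mpr h1u
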